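/- For 0 < α < 1 and σ = 1 - α/2, the coefficients a_ℓ^{(α,σ)} defined by a_0 = σ^{1-α} and a_ℓ = (ℓ+σ)^{1-α} - (ℓ-1+σ)^{1-α} for ℓ ≥ 1 form a strictly decreasing positive sequence: a_0 > a_1 > a_2 > ⋯ > 0. -/
import Mathlib

/-- The coefficients `a_ℓ^{(α,σ)}`. -/
noncomputable def aCoef (α σ : ℝ) : ℕ → ℝ
  | 0 => σ ^ (1 - α)
  | (ℓ + 1) => ((ℓ : ℝ) + 1 + σ) ^ (1 - α) - ((ℓ : ℝ) + σ) ^ (1 - α)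

lemma midpoint_rpow {β : ℝ} (hβ0 : 0 < β) (hβ1 : β < 1) {x y : ℝ} (hx : 0 ≤ x) (hy : 0 ≤ y)
    (hxy : x ≠ y) : x ^ β + y ^ β < 2 * (((x + y) / 2) ^ β) := by
  have h := (Real.strictConcaveOn_rpow hβ0 hβ1).2 (Set.mem_Ici.2 hx) (Set.mem_Ici.2 hy) hxy
    (by norm_num : (0:ℝ) < 1/2) (by norm_num : (0:ℝ) < 1/2) (by norm_num)
  simp only [smul_eq_mul] at h
  have hmid : (1/2 : ℝ) * x + (1/2 : ℝ) * y = (x + y) / 2 := by ring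
  rw [hmid] at h
  linarith

theorem stmt13 (α : ℝ) (hα : 0 < α) (hα' : α < 1) (σ : ℝ) (hσ : σ = 1 - α / 2) :
    (∀ ℓ : ℕ, 0 < aCoef α σ ℓ) ∧
    (∀ ℓ : ℕ, aCoef α σ (ℓ + 1) < aCoef α σ ℓ) := by
  have hβ0 : 0 < 1 - α := by linarith
  have hβ1 : 1 - α < 1 := by linarith
  have hσ0 : 0 < σ := by rw [hσ]; linarith
  constructor
  · intro ℓ
    cases ℓ with
    | zero => exact Real.rpow_pos_of_pos hσ0 _
    | succ n =>
      have h1 : ((n : ℝ) + σ) ^ (1 - α) < ((n : ℝ) + 1 + σ) ^ (1 - α) := by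
        apply Real.rpow_lt_rpow (by positivity) (by linarith) hβ0
      simpa [aCoef] using sub_pos.2 h1
  · intro ℓ
    cases ℓ with
    | zero =>
      -- a_1 < a_0 : (1+σ)^β - σ^β < σ^β
      have hsh : aCoef α σ 1 = (1 + σ) ^ (1 - α) - σ ^ (1 - α) := by
        simp [aCoef]
      rw [hsh, show aCoef α σ 0 = σ ^ (1 - α) from rfl]
      have key : (1 + σ) ^ (1 - α) < 2 * σ ^ (1 - α) := by
        have hb : (1 + 1/σ) ^ (1 - α) < 1 + (1 - α) * (1/σ) :=
          rpow_one_add_lt_one_add_mul_self (by nlinarith [one_div_pos.2 hσ0])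
            (one_div_ne_zero hσ0.ne') hβ0 hβ1
        have hfac : (1 + σ) ^ (1 - α) = σ ^ (1 - α) * (1 + 1/σ) ^ (1 - α) := by
          rw [← Real.mul_rpow hσ0.le (by positivity)]
          rw [mul_add, mul_one, mul_one_div, div_self hσ0.ne']
          ring
        have hsp : 0 < σ ^ (1 - α) := Real.rpow_pos_of_pos hσ0 _
        have h2 : (1 - α) * (1/σ) < 1 := by
          rw [mul_one_div, div_lt_one hσ0, hσ]
          linarith
        calc (1 + σ) ^ (1 - α) = σ ^ (1 - α) * (1 + 1/σ) ^ (1 - α) := hfac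
          _ < σ ^ (1 - α) * (1 + (1 - α) * (1/σ)) := by
              exact mul_lt_mul_of_pos_left hb hsp
          _ < σ ^ (1 - α) * 2 := by
              apply mul_lt_mul_of_pos_left _ hsp; linarith
          _ = 2 * σ ^ (1 - α) := by ring
      linarith
    | succ n =>
      have e2 : aCoef α σ (n + 1 + 1) =
          ((n : ℝ) + 1 + 1 + σ) ^ (1 - α) - ((n : ℝ) + 1 + σ) ^ (1 - α) := by
        simp [aCoef]
      have e1 : aCoef α σ (n + 1) =
          ((n : ℝ) + 1 + σ) ^ (1 - α) - ((n : ℝ) + σ) ^ (1 - α) := rfl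
      rw [e2, e1]
      have h := midpoint_rpow hβ0 hβ1 (x := (n : ℝ) + σ) (y := (n : ℝ) + 2 + σ)
        (by positivity) (by positivity) (by intro h; linarith [congrArg id h])
      have hmid : (((n : ℝ) + σ) + ((n : ℝ) + 2 + σ)) / 2 = (n : ℝ) + 1 + σ := by ring
      rw [hmid] at h
      have he : ((n : ℝ) + 1 + 1 + σ) = ((n : ℝ) + 2 + σ) := by ring
      rw [he]
      linarith
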